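/- Let S and A be nonempty finite sets, let γ ∈ [0,1), let π : S → PMF(A) be a policy, and let ρ⁰ ∈ PMF(S). Let (M_t)_{t ∈ ℕ} be a sequence of nonempty sets of models (pairs (P, r) of a transition kernel P : S → A → PMF(S) and a reward r : S × A → [0,1]) such that for every t ∈ ℕ the sets M_t and M_{t+1} are mutually within (L_P, L_r): for every m = (P₁, r₁) ∈ M_t there exists (P₂, r₂) ∈ M_{t+1} with Σ_{s'} |P₁(s,a)(s') − P₂(s,a)(s')| ≤ L_P and |r₁(s,a) − r₂(s,a)| ≤ L_r for all (s,a), and symmetrically. Define the robust objective J^R(π, t) = inf_{m ∈ M_t} J(π, m), where J(π, m) is the expected discounted return of π under model m from ρ⁰. Then for all t₀ ∈ ℕ and t ∈ ℕ, |J^R(π, t₀) − J^R(π, t₀ + t)| ≤ L' · t, where L' = γ·L_P/(1−γ)² + L_r/(1−γ). -/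

import Mathlib

noncomputable section

/-- Policy-mixed one-step state-to-state kernel: `K^π(s'|s) = ∑_a π(s)(a) · K(s,a)(s')`. -/
def kerPi {S A : Type*} [Fintype A] (π : S → PMF A) (K : S → A → PMF S)
    (s s' : S) : ℝ :=
  ∑ a : A, ((π s) a).toReal * ((K s a) s').toReal

/-- State distribution at time step `k` under policy `π`, kernel `K` and initial
distribution `ρ`: `μ₀ = ρ`, `μ_{k+1}(s') = ∑_s μ_k(s) · ∑_a π(s)(a) · K(s,a)(s')`. -/
def stateDist {S A : Type*} [Fintype S] [Fintype A] (π : S → PMF A)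
    (K : S → A → PMF S) (ρ : PMF S) : ℕ → S → ℝ
  | 0 => fun s => (ρ s).toReal
  | (k + 1) => fun s' => ∑ s : S, stateDist π K ρ k s * kerPi π K s s'

/-- Discounted state occupancy measure `d^π(s) = (1-γ) ∑_{k≥0} γ^k μ_k(s)`. -/
def occ {S A : Type*} [Fintype S] [Fintype A] (γ : ℝ) (π : S → PMF A)
    (K : S → A → PMF S) (ρ : PMF S) (s : S) : ℝ :=
  (1 - γ) * ∑' k : ℕ, γ ^ k * stateDist π K ρ k s

/-- Expected discounted return
`J(π, K, r) = ∑_{k≥0} γ^k ∑_s μ_k(s) ∑_a π(s)(a) r(s,a)`. -/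
def ret {S A : Type*} [Fintype S] [Fintype A] (γ : ℝ) (π : S → PMF A)
    (K : S → A → PMF S) (ρ : PMF S) (r : S × A → ℝ) : ℝ :=
  ∑' k : ℕ, γ ^ k * ∑ s : S, stateDist π K ρ k s * ∑ a : A, ((π s) a).toReal * r (s, a)

/-- A model of a finite MDP: a transition kernel together with a reward function. -/
abbrev Model (S A : Type*) [Fintype S] : Type _ := (S → A → PMF S) × (S × A → ℝ)

/-! Pairing each model of `M t` with a close model of `M (t + 1)`, and conversely, reduces the
claim to a one-step bound on `|J(π, m₁) - J(π, m₂)|` for close models. If the kernels are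
`L_P`-close row by row, the state distributions after `k` steps are `k L_P`-close in `ℓ¹`, so the
`k`-th terms of the two returns differ by at most `γᵏ (k L_P + L_r)`; summing the series gives
`γ L_P / (1 - γ)² + L_r / (1 - γ)`. Infima of two families that are pairwise this close are this
close, and the bound telescopes over `t` episodes. -/

open Finset

theorem PMF.sum_toReal_eq_one {α : Type*} [Fintype α] (p : PMF α) : ∑ a, (p a).toReal = 1 := by
  rw [← ENNReal.toReal_sum fun a _ => p.apply_ne_top a, ← tsum_fintype (L := .unconditional _),
    p.tsum_coe, ENNReal.toReal_one]

section FiniteSums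

variable {ι κ : Type*} [Fintype ι] [Fintype κ]

theorem sum_mul_le_of_le {p f : ι → ℝ} {c : ℝ} (hp : ∀ i, 0 ≤ p i) (hp1 : ∑ i, p i = 1)
    (hf : ∀ i, f i ≤ c) : ∑ i, p i * f i ≤ c :=
  calc ∑ i, p i * f i ≤ ∑ i, p i * c :=
        sum_le_sum fun i _ => mul_le_mul_of_nonneg_left (hf i) (hp i)
    _ = c := by rw [← sum_mul, hp1, one_mul]

theorem abs_sum_mul_sub_sum_mul_le (a b x y : ι → ℝ) :
    |∑ i, a i * x i - ∑ i, b i * y i| ≤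
      ∑ i, |a i - b i| * |x i| + ∑ i, |b i| * |x i - y i| :=
  calc |∑ i, a i * x i - ∑ i, b i * y i|
      = |∑ i, ((a i - b i) * x i + b i * (x i - y i))| := by
        rw [← sum_sub_distrib]; exact congrArg _ (sum_congr rfl fun i _ => by ring)
    _ ≤ ∑ i, (|a i - b i| * |x i| + |b i| * |x i - y i|) :=
        (abs_sum_le_sum_abs _ _).trans <| sum_le_sum fun i _ =>
          (abs_add_le _ _).trans_eq (by rw [abs_mul, abs_mul])
    _ = _ := sum_add_distrib

theorem sum_abs_sum_mul_sub_sum_mul_le {μ ν : ι → ℝ} {P Q : ι → κ → ℝ} {c : ℝ}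
    (hν : ∀ i, 0 ≤ ν i) (hν1 : ∑ i, ν i = 1) (hP : ∀ i j, 0 ≤ P i j)
    (hP1 : ∀ i, ∑ j, P i j = 1)
    (hPQ : ∀ i, ∑ j, |P i j - Q i j| ≤ c) :
    ∑ j, |∑ i, μ i * P i j - ∑ i, ν i * Q i j| ≤ ∑ i, |μ i - ν i| + c :=
  calc ∑ j, |∑ i, μ i * P i j - ∑ i, ν i * Q i j|
      ≤ ∑ j, (∑ i, |μ i - ν i| * P i j + ∑ i, ν i * |P i j - Q i j|) :=
        sum_le_sum fun j _ => by
          simpa only [abs_of_nonneg (hP _ j), abs_of_nonneg (hν _)] using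
            abs_sum_mul_sub_sum_mul_le μ ν (P · j) (Q · j)
    _ = ∑ i, |μ i - ν i| * ∑ j, P i j + ∑ i, ν i * ∑ j, |P i j - Q i j| := by
        simp only [sum_add_distrib, mul_sum]; rw [sum_comm, sum_comm (γ := κ)]
    _ ≤ ∑ i, |μ i - ν i| + c := by
        simp only [hP1, mul_one]; gcongr; exact sum_mul_le_of_le hν hν1 hPQ

end FiniteSums

theorem abs_tsum_sub_tsum_le {γ a b : ℝ} (hγ0 : 0 ≤ γ) (hγ1 : γ < 1) {f g : ℕ → ℝ}
    (hf : Summable f) (hg : Summable g) (h : ∀ k, |f k - g k| ≤ γ ^ k * (k * a + b)) :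
    |∑' k, f k - ∑' k, g k| ≤ γ * a / (1 - γ) ^ 2 + b / (1 - γ) := by
  have hγ : ‖γ‖ < 1 := by rwa [Real.norm_eq_abs, abs_of_nonneg hγ0]
  have hsum :
      HasSum (fun k : ℕ => γ ^ k * (k * a + b)) (γ * a / (1 - γ) ^ 2 + b / (1 - γ)) := by
    have hγ' : 1 - γ ≠ 0 := by linarith
    have := ((hasSum_coe_mul_geometric_of_norm_lt_one hγ).mul_right a).add
      ((hasSum_geometric_of_lt_one hγ0 hγ1).mul_right b)
    rw [show γ * a / (1 - γ) ^ 2 + b / (1 - γ) = γ / (1 - γ) ^ 2 * a + (1 - γ)⁻¹ * b by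
      field_simp]
    exact this.congr_fun fun k => by ring
  rw [← hf.tsum_sub hg]
  exact tsum_of_norm_bounded hsum fun k => (Real.norm_eq_abs _).trans_le (h k)

section MDP

variable {S A : Type*} [Fintype A] (π : S → PMF A) (K K₁ K₂ : S → A → PMF S) (ρ : PMF S)

theorem kerPi_nonneg (s s' : S) : 0 ≤ kerPi π K s s' :=
  sum_nonneg fun _ _ => mul_nonneg ENNReal.toReal_nonneg ENNReal.toReal_nonneg

/-- The paper's `r^π`; `ret γ π K ρ r` unfolds to `∑' k, γ ^ k * ∑ s, μ_k(s) * r^π(s)`. -/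
def rewardPi (r : S × A → ℝ) (s : S) : ℝ :=
  ∑ a, ((π s) a).toReal * r (s, a)

theorem rewardPi_mem_Icc {r : S × A → ℝ} (hr : ∀ x, r x ∈ Set.Icc (0 : ℝ) 1) (s : S) :
    rewardPi π r s ∈ Set.Icc (0 : ℝ) 1 :=
  ⟨sum_nonneg fun a _ => mul_nonneg ENNReal.toReal_nonneg (hr (s, a)).1,
    sum_mul_le_of_le (fun _ => ENNReal.toReal_nonneg) (PMF.sum_toReal_eq_one _)
      fun a => (hr (s, a)).2⟩

theorem abs_rewardPi_sub_le {r₁ r₂ : S × A → ℝ} {L_r : ℝ}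
    (hr : ∀ s a, |r₁ (s, a) - r₂ (s, a)| ≤ L_r) (s : S) :
    |rewardPi π r₁ s - rewardPi π r₂ s| ≤ L_r := by
  simp only [rewardPi, ← sum_sub_distrib, ← mul_sub]
  refine (abs_sum_le_sum_abs _ _).trans ?_
  simp only [abs_mul, abs_of_nonneg ENNReal.toReal_nonneg]
  exact sum_mul_le_of_le (fun _ => ENNReal.toReal_nonneg) (PMF.sum_toReal_eq_one _) (hr s)

variable [Fintype S]

theorem sum_kerPi_eq_one (s : S) : ∑ s', kerPi π K s s' = 1 := by
  simp only [kerPi]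
  rw [sum_comm]
  simp only [← mul_sum, PMF.sum_toReal_eq_one, mul_one]

theorem sum_abs_kerPi_sub_le {L_P : ℝ}
    (hK : ∀ s a, ∑ s', |((K₁ s a) s').toReal - ((K₂ s a) s').toReal| ≤ L_P) (s : S) :
    ∑ s', |kerPi π K₁ s s' - kerPi π K₂ s s'| ≤ L_P :=
  calc ∑ s', |kerPi π K₁ s s' - kerPi π K₂ s s'|
      ≤ ∑ s', ∑ a, ((π s) a).toReal * |((K₁ s a) s').toReal - ((K₂ s a) s').toReal| :=
        sum_le_sum fun s' _ => by
          simp only [kerPi, ← sum_sub_distrib, ← mul_sub]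
          refine (abs_sum_le_sum_abs _ _).trans_eq (sum_congr rfl fun a _ => ?_)
          rw [abs_mul, abs_of_nonneg ENNReal.toReal_nonneg]
    _ = ∑ a, ((π s) a).toReal * ∑ s', |((K₁ s a) s').toReal - ((K₂ s a) s').toReal| := by
        rw [sum_comm]; simp only [mul_sum]
    _ ≤ L_P := sum_mul_le_of_le (fun _ => ENNReal.toReal_nonneg) (PMF.sum_toReal_eq_one _) (hK s)

theorem stateDist_nonneg (k : ℕ) (s : S) : 0 ≤ stateDist π K ρ k s := by
  induction k generalizing s with
  | zero => exact ENNReal.toReal_nonneg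
  | succ k ih => exact sum_nonneg fun s₀ _ => mul_nonneg (ih s₀) (kerPi_nonneg π K s₀ s)

theorem sum_stateDist_eq_one (k : ℕ) : ∑ s, stateDist π K ρ k s = 1 := by
  induction k with
  | zero => exact PMF.sum_toReal_eq_one ρ
  | succ k ih =>
    simp only [stateDist]
    rw [sum_comm]
    simp only [← mul_sum, sum_kerPi_eq_one, mul_one, ih]

theorem sum_abs_stateDist_sub_le {L_P : ℝ}
    (hK : ∀ s a, ∑ s', |((K₁ s a) s').toReal - ((K₂ s a) s').toReal| ≤ L_P) (k : ℕ) :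
    ∑ s, |stateDist π K₁ ρ k s - stateDist π K₂ ρ k s| ≤ k * L_P := by
  induction k with
  | zero => simp [stateDist]
  | succ k ih =>
    calc ∑ s, |stateDist π K₁ ρ (k + 1) s - stateDist π K₂ ρ (k + 1) s|
        ≤ ∑ s, |stateDist π K₁ ρ k s - stateDist π K₂ ρ k s| + L_P :=
          sum_abs_sum_mul_sub_sum_mul_le (stateDist_nonneg π K₂ ρ k)
            (sum_stateDist_eq_one π K₂ ρ k)
            (kerPi_nonneg π K₁) (sum_kerPi_eq_one π K₁) (sum_abs_kerPi_sub_le π K₁ K₂ hK)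
      _ ≤ (k + 1 : ℕ) * L_P := by push_cast; linarith

theorem sum_stateDist_mul_rewardPi_mem_Icc {r : S × A → ℝ}
    (hr : ∀ x, r x ∈ Set.Icc (0 : ℝ) 1) (k : ℕ) :
    ∑ s, stateDist π K ρ k s * rewardPi π r s ∈ Set.Icc (0 : ℝ) 1 :=
  ⟨sum_nonneg fun s _ => mul_nonneg (stateDist_nonneg π K ρ k s) (rewardPi_mem_Icc π hr s).1,
    sum_mul_le_of_le (stateDist_nonneg π K ρ k) (sum_stateDist_eq_one π K ρ k)
      fun s => (rewardPi_mem_Icc π hr s).2⟩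

theorem abs_sum_stateDist_mul_rewardPi_sub_le {r₁ r₂ : S × A → ℝ} {L_P L_r : ℝ}
    (hr₁ : ∀ x, r₁ x ∈ Set.Icc (0 : ℝ) 1)
    (hK : ∀ s a, ∑ s', |((K₁ s a) s').toReal - ((K₂ s a) s').toReal| ≤ L_P)
    (hr : ∀ s a, |r₁ (s, a) - r₂ (s, a)| ≤ L_r) (k : ℕ) :
    |∑ s, stateDist π K₁ ρ k s * rewardPi π r₁ s -
        ∑ s, stateDist π K₂ ρ k s * rewardPi π r₂ s|
      ≤ k * L_P + L_r := by
  refine (abs_sum_mul_sub_sum_mul_le _ _ _ _).trans (add_le_add ?_ ?_)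
  · refine le_trans (sum_le_sum fun s _ => ?_) (sum_abs_stateDist_sub_le π K₁ K₂ ρ hK k)
    have hle : |rewardPi π r₁ s| ≤ 1 := abs_le.2 ⟨by linarith [(rewardPi_mem_Icc π hr₁ s).1],
      (rewardPi_mem_Icc π hr₁ s).2⟩
    exact mul_le_of_le_one_right (abs_nonneg _) hle
  · simp only [abs_of_nonneg (stateDist_nonneg π K₂ ρ k _)]
    exact sum_mul_le_of_le (stateDist_nonneg π K₂ ρ k) (sum_stateDist_eq_one π K₂ ρ k)
      (abs_rewardPi_sub_le π hr)

theorem summable_ret_terms {γ : ℝ} (hγ0 : 0 ≤ γ) (hγ1 : γ < 1) {r : S × A → ℝ}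
    (hr : ∀ x, r x ∈ Set.Icc (0 : ℝ) 1) :
    Summable fun k : ℕ => γ ^ k * ∑ s, stateDist π K ρ k s * rewardPi π r s := by
  refine (summable_geometric_of_lt_one hγ0 hγ1).of_nonneg_of_le (fun k => ?_) fun k => ?_
  · exact mul_nonneg (pow_nonneg hγ0 k) (sum_stateDist_mul_rewardPi_mem_Icc π K ρ hr k).1
  · exact mul_le_of_le_one_right (pow_nonneg hγ0 k)
      (sum_stateDist_mul_rewardPi_mem_Icc π K ρ hr k).2

theorem ret_nonneg {γ : ℝ} (hγ0 : 0 ≤ γ) {r : S × A → ℝ}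
    (hr : ∀ x, r x ∈ Set.Icc (0 : ℝ) 1) :
    0 ≤ ret γ π K ρ r :=
  tsum_nonneg fun k =>
    mul_nonneg (pow_nonneg hγ0 k) (sum_stateDist_mul_rewardPi_mem_Icc π K ρ hr k).1

theorem abs_ret_sub_ret_le {γ L_P L_r : ℝ} (hγ0 : 0 ≤ γ) (hγ1 : γ < 1) {r₁ r₂ : S × A → ℝ}
    (hr₁ : ∀ x, r₁ x ∈ Set.Icc (0 : ℝ) 1) (hr₂ : ∀ x, r₂ x ∈ Set.Icc (0 : ℝ) 1)
    (hK : ∀ s a, ∑ s', |((K₁ s a) s').toReal - ((K₂ s a) s').toReal| ≤ L_P)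
    (hr : ∀ s a, |r₁ (s, a) - r₂ (s, a)| ≤ L_r) :
    |ret γ π K₁ ρ r₁ - ret γ π K₂ ρ r₂| ≤ γ * L_P / (1 - γ) ^ 2 + L_r / (1 - γ) :=
  abs_tsum_sub_tsum_le hγ0 hγ1 (summable_ret_terms π K₁ ρ hγ0 hγ1 hr₁)
    (summable_ret_terms π K₂ ρ hγ0 hγ1 hr₂) fun k => by
      rw [← mul_sub, abs_mul, abs_of_nonneg (pow_nonneg hγ0 k)]
      exact mul_le_mul_of_nonneg_left
        (abs_sum_stateDist_mul_rewardPi_sub_le π K₁ K₂ ρ hr₁ hK hr k) (pow_nonneg hγ0 k)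

end MDP

section Infimum

variable {α : Type*} {f : α → ℝ} {s t : Set α} {L : ℝ}

theorem sInf_image_le_sInf_image_add (hs : s.Nonempty) (ht : BddBelow (f '' t))
    (h : ∀ x ∈ s, ∃ y ∈ t, f y ≤ f x + L) : sInf (f '' t) ≤ sInf (f '' s) + L := by
  rw [← sub_le_iff_le_add]
  refine le_csInf (hs.image f) ?_
  rintro _ ⟨x, hx, rfl⟩
  obtain ⟨y, hy, hyx⟩ := h x hx
  linarith [csInf_le ht ⟨y, hy, rfl⟩]

theorem abs_sInf_image_sub_sInf_image_le (hs : s.Nonempty) (ht : t.Nonempty)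
    (hs' : BddBelow (f '' s)) (ht' : BddBelow (f '' t))
    (hst : ∀ x ∈ s, ∃ y ∈ t, |f x - f y| ≤ L) (hts : ∀ y ∈ t, ∃ x ∈ s, |f x - f y| ≤ L) :
    |sInf (f '' s) - sInf (f '' t)| ≤ L := by
  have hle_t := sInf_image_le_sInf_image_add hs ht' fun x hx =>
    (hst x hx).imp fun y ⟨hy, hxy⟩ => ⟨hy, by linarith [(abs_sub_le_iff.1 hxy).2]⟩
  have hle_s := sInf_image_le_sInf_image_add ht hs' fun y hy =>
    (hts y hy).imp fun x ⟨hx, hxy⟩ => ⟨hx, by linarith [(abs_sub_le_iff.1 hxy).1]⟩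
  exact abs_sub_le_iff.2 ⟨by linarith, by linarith⟩

end Infimum

theorem robust_obj_lipschitz_in_time_general {S A : Type*} [Fintype S] [Fintype A]
    (γ : ℝ) (hγ0 : 0 ≤ γ) (hγ1 : γ < 1)
    (π : S → PMF A) (ρ : PMF S)
    (M : ℕ → Set (Model S A)) (hM : ∀ t : ℕ, (M t).Nonempty)
    (hrew : ∀ t : ℕ, ∀ m ∈ M t, ∀ x, m.2 x ∈ Set.Icc (0 : ℝ) 1)
    (L_P L_r : ℝ)
    (hfwd : ∀ t : ℕ, ∀ m₁ ∈ M t, ∃ m₂ ∈ M (t + 1),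
      (∀ s : S, ∀ a : A, ∑ s' : S, |((m₁.1 s a) s').toReal - ((m₂.1 s a) s').toReal| ≤ L_P) ∧
      ∀ s : S, ∀ a : A, |m₁.2 (s, a) - m₂.2 (s, a)| ≤ L_r)
    (hbwd : ∀ t : ℕ, ∀ m₂ ∈ M (t + 1), ∃ m₁ ∈ M t,
      (∀ s : S, ∀ a : A, ∑ s' : S, |((m₁.1 s a) s').toReal - ((m₂.1 s a) s').toReal| ≤ L_P) ∧
      ∀ s : S, ∀ a : A, |m₁.2 (s, a) - m₂.2 (s, a)| ≤ L_r) :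
    ∀ t₀ t : ℕ,
      |sInf ((fun m : Model S A => ret γ π m.1 ρ m.2) '' M t₀) -
          sInf ((fun m : Model S A => ret γ π m.1 ρ m.2) '' M (t₀ + t))| ≤
        (γ * L_P / (1 - γ) ^ 2 + L_r / (1 - γ)) * t := by
  intro t₀ t
  set J : Model S A → ℝ := fun m => ret γ π m.1 ρ m.2
  have hbdd (u : ℕ) : BddBelow (J '' M u) :=
    ⟨0, by rintro _ ⟨m, hm, rfl⟩; exact ret_nonneg π m.1 ρ hγ0 (hrew u m hm)⟩
  have hclose (u : ℕ) {m₁ m₂ : Model S A} (hm₁ : m₁ ∈ M u) (hm₂ : m₂ ∈ M (u + 1))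
      (hm : (∀ s a, ∑ s', |((m₁.1 s a) s').toReal - ((m₂.1 s a) s').toReal| ≤ L_P) ∧
        ∀ s a, |m₁.2 (s, a) - m₂.2 (s, a)| ≤ L_r) :
      |J m₁ - J m₂| ≤ γ * L_P / (1 - γ) ^ 2 + L_r / (1 - γ) :=
    abs_ret_sub_ret_le π m₁.1 m₂.1 ρ hγ0 hγ1 (hrew u m₁ hm₁) (hrew (u + 1) m₂ hm₂) hm.1 hm.2
  have hstep (u : ℕ) : |sInf (J '' M u) - sInf (J '' M (u + 1))| ≤
      γ * L_P / (1 - γ) ^ 2 + L_r / (1 - γ) :=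
    abs_sInf_image_sub_sInf_image_le (hM u) (hM (u + 1)) (hbdd u) (hbdd (u + 1))
      (fun m₁ hm₁ => (hfwd u m₁ hm₁).imp fun _ ⟨hm₂, h⟩ => ⟨hm₂, hclose u hm₁ hm₂ h⟩)
      (fun m₂ hm₂ => (hbwd u m₂ hm₂).imp fun _ ⟨hm₁, h⟩ => ⟨hm₁, hclose u hm₁ hm₂ h⟩)
  have hsum := dist_le_range_sum_of_dist_le (f := fun k => sInf (J '' M (t₀ + k))) t
    fun _ => hstep _
  simp only [Real.dist_eq, add_zero, sum_const, card_range, nsmul_eq_mul] at hsum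
  linarith

/-- **Theorem 2 of the paper.** For a sequence of nonempty uncertainty sets
of models (with `[0,1]`-valued rewards) whose consecutive elements are mutually within
`(L_P, L_r)`, the robust objective `J^R(π, t) = inf_{m ∈ M_t} J(π, m)` is Lipschitz in time:
`|J^R(π, t₀) - J^R(π, t₀+t)| ≤ L' t` with `L' = γ L_P/(1-γ)² + L_r/(1-γ)`. -/
theorem robust_obj_lipschitz_in_time {S A : Type*} [Fintype S] [Fintype A]
    [Nonempty S] [Nonempty A]
    (γ : ℝ) (hγ0 : 0 ≤ γ) (hγ1 : γ < 1)
    (π : S → PMF A) (ρ : PMF S)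
    (M : ℕ → Set (Model S A)) (hM : ∀ t : ℕ, (M t).Nonempty)
    (hrew : ∀ t : ℕ, ∀ m ∈ M t, ∀ x, m.2 x ∈ Set.Icc (0 : ℝ) 1)
    (L_P L_r : ℝ) (hLP : 0 ≤ L_P) (hLr : 0 ≤ L_r)
    (hfwd : ∀ t : ℕ, ∀ m₁ ∈ M t, ∃ m₂ ∈ M (t + 1),
      (∀ s : S, ∀ a : A, ∑ s' : S, |((m₁.1 s a) s').toReal - ((m₂.1 s a) s').toReal| ≤ L_P) ∧
      ∀ s : S, ∀ a : A, |m₁.2 (s, a) - m₂.2 (s, a)| ≤ L_r)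
    (hbwd : ∀ t : ℕ, ∀ m₂ ∈ M (t + 1), ∃ m₁ ∈ M t,
      (∀ s : S, ∀ a : A, ∑ s' : S, |((m₁.1 s a) s').toReal - ((m₂.1 s a) s').toReal| ≤ L_P) ∧
      ∀ s : S, ∀ a : A, |m₁.2 (s, a) - m₂.2 (s, a)| ≤ L_r) :
    ∀ t₀ t : ℕ,
      |sInf ((fun m : Model S A => ret γ π m.1 ρ m.2) '' M t₀) -
          sInf ((fun m : Model S A => ret γ π m.1 ρ m.2) '' M (t₀ + t))| ≤
        (γ * L_P / (1 - γ) ^ 2 + L_r / (1 - γ)) * t :=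
  robust_obj_lipschitz_in_time_general γ hγ0 hγ1 π ρ M hM hrew L_P L_r hfwd hbwd
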